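/- arXiv:0901.3232 — 5 statements merged into one kernel-verified Lean document; each statement's English description precedes it below -/
import Mathlib

section
/- Let λ be a Young diagram with conjugate λ', and for k ≥ 1 set m_k = min(k−1, λ_k) + min(k−1, λ'_k). If m_k is odd, then λ_k + λ'_k is odd. Equivalently, (−1)^{m_k} = (−1)^{(λ_k + λ'_k)·m_k}. -/
/-- A Young diagram given by row lengths `part 1 ≥ part 2 ≥ ...` (1-indexed),
weakly decreasing and eventually zero. -/
structure Partition' where
  part : ℕ → ℕ
  antitone : ∀ ⦃i j : ℕ⦄, i ≤ j → part j ≤ part i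
  finite : ∃ N : ℕ, ∀ i : ℕ, N ≤ i → part i = 0

/-- The conjugate partition: `conj j = #{i ≥ 1 : part i ≥ j}`. -/
noncomputable def Partition'.conj (μ : Partition') (j : ℕ) : ℕ :=
  Set.ncard {i : ℕ | 1 ≤ i ∧ j ≤ μ.part i}

/-- The box `(i,j)` belongs to the diagram. -/
def Partition'.mem (μ : Partition') (i j : ℕ) : Prop :=
  1 ≤ i ∧ 1 ≤ j ∧ j ≤ μ.part i

/-!
The box `(k, k)` lies in `λ` iff it lies in `λ'`, i.e. `k ≤ λ_k ↔ k ≤ λ'_k`. If it does, both minima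
equal `k - 1` and `m_k` is even; if it does not, both minima are attained by `λ_k` and `λ'_k`, so
`m_k = λ_k + λ'_k`. The sign identity is then a consequence of the parity statement alone.
-/

theorem neg_one_pow_eq_neg_one_pow_mul_of_odd_imp {m n : ℕ} (h : Odd m → Odd n) :
    (-1 : ℤ) ^ m = (-1 : ℤ) ^ (n * m) := by
  rcases Nat.even_or_odd m with hm | hm
  · rw [hm.neg_one_pow, (hm.mul_left n).neg_one_pow]
  · rw [hm.neg_one_pow, ((h hm).mul hm).neg_one_pow]

theorem odd_add_of_odd_min_sub_one_add {k a b : ℕ} (h : k ≤ a ↔ k ≤ b)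
    (hodd : Odd (min (k - 1) a + min (k - 1) b)) : Odd (a + b) := by
  by_cases ha : k ≤ a
  · have hb := h.mp ha
    rw [min_eq_left (by omega), min_eq_left (by omega)] at hodd
    exact absurd ⟨k - 1, rfl⟩ (Nat.not_even_iff_odd.mpr hodd)
  · have hb := mt h.mpr ha
    rwa [min_eq_right (by omega), min_eq_right (by omega)] at hodd

namespace Partition'

variable (μ : Partition')

theorem finite_setOf_le_part {j : ℕ} (hj : 1 ≤ j) : {i : ℕ | 1 ≤ i ∧ j ≤ μ.part i}.Finite := by
  obtain ⟨N, hN⟩ := μ.finite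
  refine (Set.finite_Iio N).subset fun i ⟨_, hji⟩ => ?_
  by_contra hNi
  have := hN i (not_lt.mp hNi)
  omega

theorem le_conj_iff_le_part {i j : ℕ} (hi : 1 ≤ i) (hj : 1 ≤ j) :
    i ≤ μ.conj j ↔ j ≤ μ.part i := by
  constructor
  · intro hle
    by_contra! hlt
    have hsub : {i' : ℕ | 1 ≤ i' ∧ j ≤ μ.part i'} ⊆ Set.Ico 1 i := fun i' ⟨hi', hji'⟩ =>
      ⟨hi', lt_of_not_ge fun hii' => by have := μ.antitone hii'; omega⟩
    have := Set.ncard_le_ncard hsub (Set.finite_Ico 1 i)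
    rw [Set.ncard_Ico_nat] at this
    exact absurd (hle.trans this) (by omega)
  · intro hji
    have hsub : Set.Icc 1 i ⊆ {i' : ℕ | 1 ≤ i' ∧ j ≤ μ.part i'} := fun i' ⟨hi', hi'i⟩ =>
      ⟨hi', hji.trans (μ.antitone hi'i)⟩
    have := Set.ncard_le_ncard hsub (μ.finite_setOf_le_part hj)
    rwa [Set.ncard_Icc_nat, Nat.add_sub_cancel] at this

end Partition'

/-- With `m_k = min(k−1, λ_k) + min(k−1, λ'_k)`: if `m_k` is odd then `λ_k + λ'_k` is odd;
equivalently `(−1)^{m_k} = (−1)^{(λ_k + λ'_k)·m_k}`. -/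
theorem parity_mk (μ : Partition') (k : ℕ) (hk : 1 ≤ k) :
    (Odd (min (k - 1) (μ.part k) + min (k - 1) (μ.conj k)) → Odd (μ.part k + μ.conj k)) ∧
    ((-1 : ℤ) ^ (min (k - 1) (μ.part k) + min (k - 1) (μ.conj k))
      = (-1 : ℤ) ^ ((μ.part k + μ.conj k) * (min (k - 1) (μ.part k) + min (k - 1) (μ.conj k)))) := by
  have hodd := odd_add_of_odd_min_sub_one_add (μ.le_conj_iff_le_part hk hk).symm
  exact ⟨hodd, neg_one_pow_eq_neg_one_pow_mul_of_odd_imp hodd⟩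
end

section
/- Let λ be a Young diagram with conjugate λ'. Then ∏_{(i,j)∈λ, i≠j} (−1) = (∏_{(i,j)∈λ, i<j} (−1)^{λ'_j + λ_j}) · (∏_{(i,j)∈λ, i>j} (−1)^{λ_i + λ'_i}). Equivalently, writing N for the number of off-diagonal boxes of λ, (−1)^N = (−1)^{Σ_{(i,j)∈λ, i<j}(λ'_j+λ_j) + Σ_{(i,j)∈λ, i>j}(λ_i+λ'_i)}. -/
open Finset

namespace Partition'

instance (μ : Partition') (i j : ℕ) : Decidable (μ.mem i j) :=
  inferInstanceAs (Decidable (_ ∧ _ ∧ _))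

variable (μ : Partition')

theorem exists_bound : ∃ B, ∀ i j, μ.mem i j → i < B ∧ j < B := by
  obtain ⟨N, hN⟩ := μ.finite
  refine ⟨max N (μ.part 1 + 1), fun i j ⟨hi, hj, hji⟩ => ⟨?_, ?_⟩⟩
  · by_contra! h
    have := hN i (le_of_max_le_left h)
    omega
  · have := μ.antitone hi
    omega

theorem setOf_le_part_eq_Icc {k : ℕ} (hk : 1 ≤ k) :
    {i : ℕ | 1 ≤ i ∧ k ≤ μ.part i} = Set.Icc 1 (μ.conj k) := by
  obtain ⟨N, hN⟩ := μ.finite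
  set n := Nat.findGreatest (fun i => 1 ≤ i ∧ k ≤ μ.part i) N with hn
  have hS : {i : ℕ | 1 ≤ i ∧ k ≤ μ.part i} = Set.Icc 1 n := by
    ext i
    refine ⟨fun hi => ⟨hi.1, Nat.le_findGreatest ?_ hi⟩, fun ⟨hi, hin⟩ => ⟨hi, ?_⟩⟩
    · by_contra! h
      have := hN i h.le
      have := hi.2
      omega
    · have hspec := Nat.findGreatest_of_ne_zero hn.symm (by omega)
      exact hspec.2.trans (μ.antitone hin)
  have hconj : μ.conj k = n := by
    rw [conj, hS, Set.ncard_Icc_nat]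
    omega
  rw [hS, hconj]

theorem le_part_iff_le_conj {i k : ℕ} (hi : 1 ≤ i) (hk : 1 ≤ k) :
    k ≤ μ.part i ↔ i ≤ μ.conj k := by
  simpa [hi] using Set.ext_iff.1 (μ.setOf_le_part_eq_Icc hk) i

theorem mem_iff_le_conj {i j : ℕ} : μ.mem i j ↔ 1 ≤ i ∧ 1 ≤ j ∧ i ≤ μ.conj j := by
  refine ⟨fun ⟨hi, hj, h⟩ => ⟨hi, hj, ?_⟩, fun ⟨hi, hj, h⟩ => ⟨hi, hj, ?_⟩⟩ <;>
    simpa [μ.le_part_iff_le_conj hi hj] using h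

theorem le_part_self_iff_le_conj_self (k : ℕ) : k ≤ μ.part k ↔ k ≤ μ.conj k := by
  rcases Nat.eq_zero_or_pos k with rfl | hk
  · simp
  · exact μ.le_part_iff_le_conj hk hk

theorem card_filter_range_mem_col (k : ℕ) :
    #{i ∈ range k | μ.mem i k} = min (μ.conj k) (k - 1) := by
  have : {i ∈ range k | μ.mem i k} = Icc 1 (min (μ.conj k) (k - 1)) := by
    ext i
    simp only [mem_filter, mem_range, mem_Icc, mem_iff_le_conj]
    omega
  rw [this, Nat.card_Icc]
  omega

theorem card_filter_range_mem_row (k : ℕ) :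
    #{j ∈ range k | μ.mem k j} = min (μ.part k) (k - 1) := by
  have : {j ∈ range k | μ.mem k j} = Icc 1 (min (μ.part k) (k - 1)) := by
    ext j
    simp only [mem_filter, mem_range, mem_Icc]
    unfold Partition'.mem
    omega
  rw [this, Nat.card_Icc]
  omega

end Partition'

section Regroup

variable {M : Type*} [AddCommMonoid M] {P : ℕ → ℕ → Prop} [DecidableRel P] {B : ℕ}

theorem finsum_mem_setOf_lt_eq_sum (hP : ∀ i j, P i j → i < B ∧ j < B) (f : ℕ → M) :
    ∑ᶠ p ∈ {p : ℕ × ℕ | P p.1 p.2 ∧ p.1 < p.2}, f p.2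
      = ∑ k ∈ range B, #{i ∈ range k | P i k} • f k := by
  have hset : {p : ℕ × ℕ | P p.1 p.2 ∧ p.1 < p.2}
      = ↑({p ∈ range B ×ˢ range B | P p.1 p.2 ∧ p.1 < p.2}) := by
    ext p
    simpa using fun h _ => hP _ _ h
  rw [hset, finsum_mem_coe_finset, sum_filter, sum_product_right]
  refine sum_congr rfl fun k hk => ?_
  rw [← sum_filter]
  dsimp only
  rw [sum_const]
  congr 2
  ext i
  simp only [mem_filter, mem_range] at hk ⊢
  constructor
  · rintro ⟨-, hPik, hik⟩
    exact ⟨hik, hPik⟩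
  · rintro ⟨hik, hPik⟩
    exact ⟨by omega, hPik, hik⟩

theorem finsum_mem_setOf_gt_eq_sum (hP : ∀ i j, P i j → i < B ∧ j < B) (f : ℕ → M) :
    ∑ᶠ p ∈ {p : ℕ × ℕ | P p.1 p.2 ∧ p.2 < p.1}, f p.1
      = ∑ k ∈ range B, #{j ∈ range k | P k j} • f k := by
  have hset : {p : ℕ × ℕ | P p.1 p.2 ∧ p.2 < p.1}
      = ↑({p ∈ range B ×ˢ range B | P p.1 p.2 ∧ p.2 < p.1}) := by
    ext p
    simpa using fun h _ => hP _ _ h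
  rw [hset, finsum_mem_coe_finset, sum_filter, sum_product]
  refine sum_congr rfl fun k hk => ?_
  rw [← sum_filter]
  dsimp only
  rw [sum_const]
  congr 2
  ext j
  simp only [mem_filter, mem_range] at hk ⊢
  constructor
  · rintro ⟨-, hPkj, hjk⟩
    exact ⟨hjk, hPkj⟩
  · rintro ⟨hjk, hPkj⟩
    exact ⟨by omega, hPkj, hjk⟩

theorem ncard_setOf_ne_eq_sum (hP : ∀ i j, P i j → i < B ∧ j < B) :
    {p : ℕ × ℕ | P p.1 p.2 ∧ p.1 ≠ p.2}.ncard
      = ∑ k ∈ range B, (#{i ∈ range k | P i k} + #{j ∈ range k | P k j}) := by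
  have hsplit : {p : ℕ × ℕ | P p.1 p.2 ∧ p.1 ≠ p.2}
      = {p | P p.1 p.2 ∧ p.1 < p.2} ∪ {p | P p.1 p.2 ∧ p.2 < p.1} := by
    ext p
    simp only [Set.mem_ofPred_eq, Set.mem_union, ne_iff_lt_or_gt, and_or_left]
  have hdisj : Disjoint {p : ℕ × ℕ | P p.1 p.2 ∧ p.1 < p.2} {p | P p.1 p.2 ∧ p.2 < p.1} :=
    Set.disjoint_left.2 fun _ h1 h2 => lt_asymm h1.2 h2.2
  have hfin : {p : ℕ × ℕ | P p.1 p.2}.Finite :=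
    ((Set.finite_Iio B).prod (Set.finite_Iio B)).subset fun p hp => hP _ _ hp
  rw [← finsum_one, hsplit, finsum_mem_union hdisj (hfin.subset fun p hp => hp.1)
    (hfin.subset fun p hp => hp.1), finsum_mem_setOf_lt_eq_sum hP (fun _ => 1),
    finsum_mem_setOf_gt_eq_sum hP (fun _ => 1), ← sum_add_distrib]
  simp only [smul_eq_mul, mul_one]

end Regroup

theorem even_add_min_mul {k c p : ℕ} (h : k ≤ c ↔ k ≤ p) :
    Even ((min c (k - 1) + min p (k - 1)) * (c + p + 1)) := by
  by_cases hc : k ≤ c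
  · rw [min_eq_right (by omega), min_eq_right (by have := h.1 hc; omega), ← two_mul, mul_assoc]
    exact even_two_mul _
  · rw [min_eq_left (by omega), min_eq_left (by have := mt h.2 hc; omega)]
    exact Nat.even_mul_succ_self _

/-- The sign identity: `(−1)^N = (−1)^{Σ_{(i,j)∈λ, i<j}(λ'_j+λ_j) + Σ_{(i,j)∈λ, i>j}(λ_i+λ'_i)}`,
where `N` is the number of off-diagonal boxes of `λ`. -/
theorem sign_identity (μ : Partition') :
    (-1 : ℤ) ^ (Set.ncard {p : ℕ × ℕ | μ.mem p.1 p.2 ∧ p.1 ≠ p.2})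
      = (-1 : ℤ) ^
        ((∑ᶠ p ∈ {p : ℕ × ℕ | μ.mem p.1 p.2 ∧ p.1 < p.2}, (μ.conj p.2 + μ.part p.2)) +
         (∑ᶠ p ∈ {p : ℕ × ℕ | μ.mem p.1 p.2 ∧ p.2 < p.1}, (μ.part p.1 + μ.conj p.1))) := by
  obtain ⟨B, hB⟩ := μ.exists_bound
  rw [ncard_setOf_ne_eq_sum hB, finsum_mem_setOf_lt_eq_sum hB (fun k => μ.conj k + μ.part k),
    finsum_mem_setOf_gt_eq_sum hB (fun k => μ.part k + μ.conj k)]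
  refine neg_one_pow_congr (Nat.even_add.1 ?_)
  simp only [← sum_add_distrib]
  refine even_sum _ fun k _ => ?_
  rw [μ.card_filter_range_mem_col, μ.card_filter_range_mem_row]
  simp only [smul_eq_mul]
  exact (congrArg Even (by ring)).mpr
    (even_add_min_mul (μ.le_part_self_iff_le_conj_self k).symm)
end

section
/- Let n ≥ 1 and let q be a nonzero complex number with q not a root of unity (in particular all denominators below are nonzero). For every Young diagram λ, Q_λ(−q^{2n}, q) = Q_λ(q^{2n}, −q), where Q_λ(r,s) = ∏_{(j,j)∈λ} (r s^{λ_j − λ'_j} − r^{−1} s^{−λ_j + λ'_j} + s^{λ_j + λ'_j − 2j + 1} − s^{−λ_j − λ'_j + 2j − 1})/(s^{h(j,j)} − s^{−h(j,j)}) × ∏_{(i,j)∈λ, i≠j} (r s^{d(i,j)} − r^{−1} s^{−d(i,j)})/(s^{h(i,j)} − s^{−h(i,j)}). -/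
/-- Hooklength `h(i,j) = λ_i − i + λ'_j − j + 1` (as an integer). -/
noncomputable def hook (μ : Partition') (i j : ℕ) : ℤ :=
  (μ.part i : ℤ) - i + μ.conj j - j + 1

/-- `d(i,j) = λ_i + λ_j − i − j + 1` if `i ≤ j`, and `d(i,j) = −λ'_i − λ'_j + i + j − 1` if `i > j`. -/
noncomputable def dfun (μ : Partition') (i j : ℕ) : ℤ :=
  if i ≤ j then (μ.part i : ℤ) + μ.part j - i - j + 1
  else -(μ.conj i : ℤ) - μ.conj j + i + j - 1

/-- The Birman–Wenzl–Murakami trace weight `Q_λ(r,s)`. -/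
noncomputable def Q (μ : Partition') (r s : ℂ) : ℂ :=
  (∏ᶠ j ∈ {j : ℕ | μ.mem j j},
      (r * s ^ ((μ.part j : ℤ) - μ.conj j) - r⁻¹ * s ^ (-(μ.part j : ℤ) + μ.conj j)
        + s ^ ((μ.part j : ℤ) + μ.conj j - 2 * j + 1)
        - s ^ (-(μ.part j : ℤ) - μ.conj j + 2 * j - 1))
      / (s ^ hook μ j j - s ^ (-hook μ j j))) *
  ∏ᶠ p ∈ {p : ℕ × ℕ | μ.mem p.1 p.2 ∧ p.1 ≠ p.2},
      (r * s ^ dfun μ p.1 p.2 - r⁻¹ * s ^ (-dfun μ p.1 p.2))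
      / (s ^ hook μ p.1 p.2 - s ^ (-hook μ p.1 p.2))

/-!
Replacing `s` by `-s` multiplies `s ^ m` by `(-1) ^ m`. In a diagonal factor the exponents
`λ_j - λ'_j` and `h(j,j)` have opposite parity, so the sign change is absorbed exactly by
`r ↦ -r`. An off-diagonal factor picks up the sign `(-1) ^ (d + h + 1)`, whose parity is that of
`λ_k + λ'_k + 1` with `k = max i j`. There are `min (k-1) λ'_k + min (k-1) λ_k` off-diagonal
boxes with `max i j = k`: this is `2 (k-1)` if `(k,k) ∈ λ`, and `λ_k + λ'_k` otherwise, so in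
either case the signs attached to `k` multiply to `1`.
-/
section SignChange

variable {K : Type*} [Field K]

theorem Odd.neg_zpow_sub_neg_zpow_neg {m : ℤ} (hm : Odd m) (s : K) :
    (-s) ^ m - (-s) ^ (-m) = -(s ^ m - s ^ (-m)) := by
  rw [hm.neg_zpow, hm.neg.neg_zpow]
  ring

theorem offDiag_factor_neg (r s : K) (d h : ℤ) :
    (r * (-s) ^ d - r⁻¹ * (-s) ^ (-d)) / ((-s) ^ h - (-s) ^ (-h)) =
      (-1) ^ (d + h + 1) * ((-r * s ^ d - (-r)⁻¹ * s ^ (-d)) / (s ^ h - s ^ (-h))) := by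
  rcases Int.even_or_odd d with hd | hd <;> rcases Int.even_or_odd h with hh | hh
  · rw [hd.neg_zpow, hd.neg.neg_zpow, hh.neg_zpow, hh.neg.neg_zpow,
      (hd.add hh).add_one.neg_one_zpow]
    ring
  · rw [hd.neg_zpow, hd.neg.neg_zpow, hh.neg_zpow_sub_neg_zpow_neg, div_neg,
      (hd.add_odd hh).add_one.neg_one_zpow]
    ring
  · rw [hd.neg_zpow, hd.neg.neg_zpow, hh.neg_zpow, hh.neg.neg_zpow,
      (hd.add_even hh).add_one.neg_one_zpow]
    ring
  · rw [hd.neg_zpow, hd.neg.neg_zpow, hh.neg_zpow_sub_neg_zpow_neg, div_neg,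
      (hd.add_odd hh).add_one.neg_one_zpow]
    ring

theorem diag_factor_neg (r s : K) {a b : ℤ} (hab : Odd (a + b)) :
    (r * (-s) ^ a - r⁻¹ * (-s) ^ (-a) + (-s) ^ b - (-s) ^ (-b)) / ((-s) ^ b - (-s) ^ (-b)) =
      (-r * s ^ a - (-r)⁻¹ * s ^ (-a) + s ^ b - s ^ (-b)) / (s ^ b - s ^ (-b)) := by
  rcases Int.even_or_odd a with ha | ha
  · have hb : Odd b := by simpa using hab.sub_even ha
    rw [ha.neg_zpow, ha.neg.neg_zpow, add_sub_assoc,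
      hb.neg_zpow_sub_neg_zpow_neg, div_neg]
    ring
  · have hb : Even b := by simpa using hab.sub_odd ha
    rw [ha.neg_zpow, ha.neg.neg_zpow, hb.neg_zpow, hb.neg.neg_zpow]
    ring

end SignChange

namespace Partition'

variable (μ : Partition')

theorem setOf_le_part_subset_Ico {i k : ℕ} (h : μ.part i < k) :
    {x : ℕ | 1 ≤ x ∧ k ≤ μ.part x} ⊆ Set.Ico 1 i := fun _ ⟨hx, hkx⟩ ↦
  ⟨hx, lt_of_not_ge fun hix ↦ (h.trans_le hkx).not_ge (μ.antitone hix)⟩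

theorem le_conj_iff {i k : ℕ} (hi : 1 ≤ i) (hk : 1 ≤ k) : i ≤ μ.conj k ↔ k ≤ μ.part i := by
  constructor
  · intro hle
    by_contra! hlt
    have := Set.ncard_le_ncard (μ.setOf_le_part_subset_Ico hlt) (Set.finite_Ico 1 i)
    rw [Set.ncard_Ico_nat] at this
    exact absurd (hle.trans this) (by omega)
  · intro hki
    obtain ⟨N, hN⟩ := μ.finite
    have hfin := (Set.finite_Ico 1 N).subset
      (μ.setOf_le_part_subset_Ico (k := k) (i := N) (by rw [hN N le_rfl]; omega))
    have hsub : Set.Icc 1 i ⊆ {x : ℕ | 1 ≤ x ∧ k ≤ μ.part x} :=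
      fun x ⟨hx, hxi⟩ ↦ ⟨hx, hki.trans (μ.antitone hxi)⟩
    simpa [conj] using Set.ncard_le_ncard hsub hfin

def offDiagBoxes : Set (ℕ × ℕ) := {p | μ.mem p.1 p.2 ∧ p.1 ≠ p.2}

theorem finite_offDiagBoxes : μ.offDiagBoxes.Finite := by
  obtain ⟨N, hN⟩ := μ.finite
  refine ((Set.finite_Iio N).prod (Set.finite_Iic (μ.part 1))).subset ?_
  rintro ⟨x, y⟩ ⟨⟨hx, hy1, hy⟩, -⟩
  refine ⟨Set.mem_Iio.2 (lt_of_not_ge fun hNx ↦ ?_), hy.trans (μ.antitone hx)⟩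
  rw [hN x hNx] at hy
  omega

theorem neg_one_zpow_dfun_add_hook {K : Type*} [DivisionRing K] {p : ℕ × ℕ}
    (hp : p ∈ μ.offDiagBoxes) :
    (-1 : K) ^ (dfun μ p.1 p.2 + hook μ p.1 p.2 + 1) =
      (-1) ^ (μ.part (max p.1 p.2) + μ.conj (max p.1 p.2) + 1) := by
  obtain ⟨x, y⟩ := p
  rw [← zpow_natCast, ← Int.cast_negOnePow, ← Int.cast_negOnePow]
  congr 2
  rw [Int.negOnePow_eq_iff, Int.even_iff]
  rcases lt_or_gt_of_ne hp.2 with hxy | hxy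
  · simp only [dfun, hook, if_pos hxy.le, max_eq_right hxy.le]
    push_cast
    omega
  · simp only [dfun, hook, if_neg hxy.not_ge, max_eq_left hxy.le]
    push_cast
    omega

theorem card_filter_max_eq {b : ℕ} (hb : 1 ≤ b) :
    (μ.finite_offDiagBoxes.toFinset.filter fun p ↦ max p.1 p.2 = b).card =
      min (b - 1) (μ.conj b) + min (b - 1) (μ.part b) := by
  have hfiber : (μ.finite_offDiagBoxes.toFinset.filter fun p ↦ max p.1 p.2 = b) =
      Finset.Icc 1 (min (b - 1) (μ.conj b)) ×ˢ {b} ∪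
        {b} ×ˢ Finset.Icc 1 (min (b - 1) (μ.part b)) := by
    ext ⟨x, y⟩
    simp only [Finset.mem_filter, Set.Finite.mem_toFinset, offDiagBoxes, mem, Set.mem_ofPred_eq,
      Finset.mem_union, Finset.mem_product, Finset.mem_Icc, Finset.mem_singleton]
    rcases eq_or_ne x b with rfl | hxb
    · omega
    · rcases Nat.eq_zero_or_pos x with rfl | hx
      · omega
      · have := μ.le_conj_iff hx hb
        omega
  have hdisj : Disjoint (Finset.Icc 1 (min (b - 1) (μ.conj b)) ×ˢ {b})
      ({b} ×ˢ Finset.Icc 1 (min (b - 1) (μ.part b))) := by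
    simp only [Finset.disjoint_left, Finset.mem_product, Finset.mem_Icc, Finset.mem_singleton]
    omega
  rw [hfiber, Finset.card_union_of_disjoint hdisj, Finset.card_product, Finset.card_product]
  simp

theorem even_mul_card_filter_max_eq {b : ℕ} (hb : 1 ≤ b) :
    Even ((μ.part b + μ.conj b + 1) * (min (b - 1) (μ.conj b) + min (b - 1) (μ.part b))) := by
  have := μ.le_conj_iff hb hb
  rw [Nat.even_mul, Nat.even_iff, Nat.even_iff]
  omega

theorem finprod_neg_one_zpow_dfun_add_hook {K : Type*} [Field K] :
    ∏ᶠ p ∈ μ.offDiagBoxes, (-1 : K) ^ (dfun μ p.1 p.2 + hook μ p.1 p.2 + 1) = 1 := by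
  classical
  rw [finprod_mem_congr rfl fun p hp ↦ μ.neg_one_zpow_dfun_add_hook hp,
    ← μ.finite_offDiagBoxes.coe_toFinset, finprod_mem_coe_finset]
  refine (Finset.prod_comp (fun k ↦ (-1 : K) ^ (μ.part k + μ.conj k + 1))
    fun p : ℕ × ℕ ↦ max p.1 p.2).trans (Finset.prod_eq_one fun b hb ↦ ?_)
  obtain ⟨p, hp, rfl⟩ := Finset.mem_image.1 hb
  have hb : 1 ≤ max p.1 p.2 := le_max_of_le_left (μ.finite_offDiagBoxes.mem_toFinset.1 hp).1.1
  rw [← pow_mul, μ.card_filter_max_eq hb]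
  exact (μ.even_mul_card_filter_max_eq hb).neg_one_pow

end Partition'

theorem Q_neg_right (μ : Partition') (r s : ℂ) : Q μ r (-s) = Q μ (-r) s := by
  rw [Q, Q]
  congr 1
  · refine finprod_mem_congr rfl fun j _ ↦ ?_
    have hhook : hook μ j j = (μ.part j : ℤ) + μ.conj j - 2 * j + 1 := by rw [hook]; ring
    rw [hhook, show -(μ.part j : ℤ) + μ.conj j = -((μ.part j : ℤ) - μ.conj j) by ring,
      show -(μ.part j : ℤ) - μ.conj j + 2 * j - 1 = -((μ.part j : ℤ) + μ.conj j - 2 * j + 1) by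
        ring]
    exact diag_factor_neg r s ⟨(μ.part j : ℤ) - j, by ring⟩
  · rw [finprod_mem_congr rfl fun p _ ↦ offDiag_factor_neg r s _ _, ← Partition'.offDiagBoxes,
      finprod_mem_mul_distrib μ.finite_offDiagBoxes, μ.finprod_neg_one_zpow_dfun_add_hook, one_mul]

theorem Q_symmetry_general (n : ℕ) (q : ℂ) (μ : Partition') :
    Q μ (-q ^ (2 * n)) q = Q μ (q ^ (2 * n)) (-q) :=
  (Q_neg_right μ (q ^ (2 * n)) q).symm

/-- For `n ≥ 1` and `q` a nonzero complex number which is not a root of unity,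
`Q_λ(−q^{2n}, q) = Q_λ(q^{2n}, −q)` for every Young diagram `λ`. -/
theorem Q_symmetry (n : ℕ) (hn : 1 ≤ n) (q : ℂ) (hq : q ≠ 0)
    (hroot : ∀ m : ℕ, 0 < m → q ^ m ≠ 1) (μ : Partition') :
    Q μ (-q ^ (2 * n)) q = Q μ (q ^ (2 * n)) (-q) :=
  Q_symmetry_general n q μ
end

section
/- Define sequences of Laurent polynomials a_m, b_m, c_m ∈ ℤ[r, r^{−1}, s, s^{−1}] for m ≥ 2 by a_2 = 1, b_2 = s − s^{−1}, c_2 = −r^{−1}(s − s^{−1}), and the recursion a_{m+1} = b_m, b_{m+1} = a_m + (s − s^{−1})·b_m, c_{m+1} = r^{−1}·(c_m − (s − s^{−1})·b_m). Then in any associative algebra with elements g, e satisfying g² = 1 + (s − s^{−1})(g − r^{−1}e) and e·g = r^{−1}e, one has g^m = a_m + b_m·g + c_m·e for all m ≥ 2. -/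
variable {K : Type*} [Field K]

/-- Auxiliary: `(a_{m+2}, b_{m+2}, c_{m+2})` for the BWM power recursion. -/
def abcAux (r s : K) : ℕ → K × K × K
  | 0 => (1, s - s⁻¹, -(r⁻¹ * (s - s⁻¹)))
  | n + 1 =>
    let p := abcAux r s n
    (p.2.1, p.1 + (s - s⁻¹) * p.2.1, r⁻¹ * (p.2.2 - (s - s⁻¹) * p.2.1))

/-- `a_m` (defined for `m ≥ 2`): `a_2 = 1`, `a_{m+1} = b_m`. -/
def aCoeff (r s : K) (m : ℕ) : K := (abcAux r s (m - 2)).1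

/-- `b_m` (defined for `m ≥ 2`): `b_2 = s − s^{−1}`, `b_{m+1} = a_m + (s−s^{−1})b_m`. -/
def bCoeff (r s : K) (m : ℕ) : K := (abcAux r s (m - 2)).2.1

/-- `c_m` (defined for `m ≥ 2`): `c_2 = −r^{−1}(s−s^{−1})`,
`c_{m+1} = r^{−1}(c_m − (s−s^{−1})b_m)`. -/
def cCoeff (r s : K) (m : ℕ) : K := (abcAux r s (m - 2)).2.2

theorem smul_add_smul_add_smul_mul_of_sq_eq {R A : Type*} [CommRing R] [Ring A] [Algebra R A]
    (δ q a b c : R) {g e : A} (hquad : g ^ 2 = 1 + δ • (g - q • e)) (heg : e * g = q • e) :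
    (a • (1 : A) + b • g + c • e) * g = b • (1 : A) + (a + δ * b) • g + (q * (c - δ * b)) • e := by
  rw [add_mul, add_mul, smul_mul_assoc, smul_mul_assoc, smul_mul_assoc, one_mul, heg, ← pow_two,
    hquad]
  module

section Coeff

variable (r s : K)

theorem aCoeff_two : aCoeff r s 2 = 1 := rfl

theorem bCoeff_two : bCoeff r s 2 = s - s⁻¹ := rfl

theorem cCoeff_two : cCoeff r s 2 = -(r⁻¹ * (s - s⁻¹)) := rfl

theorem aCoeff_succ {m : ℕ} (hm : 2 ≤ m) : aCoeff r s (m + 1) = bCoeff r s m := by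
  obtain ⟨k, rfl⟩ := Nat.exists_eq_add_of_le' hm
  rfl

theorem bCoeff_succ {m : ℕ} (hm : 2 ≤ m) :
    bCoeff r s (m + 1) = aCoeff r s m + (s - s⁻¹) * bCoeff r s m := by
  obtain ⟨k, rfl⟩ := Nat.exists_eq_add_of_le' hm
  rfl

theorem cCoeff_succ {m : ℕ} (hm : 2 ≤ m) :
    cCoeff r s (m + 1) = r⁻¹ * (cCoeff r s m - (s - s⁻¹) * bCoeff r s m) := by
  obtain ⟨k, rfl⟩ := Nat.exists_eq_add_of_le' hm
  rfl

end Coeff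

theorem bwm_powers_general {A : Type*} [Ring A] [Algebra K A]
    (r s : K)
    (g e : A)
    (hquad : g ^ 2 = 1 + (s - s⁻¹) • (g - r⁻¹ • e))
    (heg : e * g = r⁻¹ • e) :
    ∀ m : ℕ, 2 ≤ m →
      g ^ m = aCoeff r s m • (1 : A) + bCoeff r s m • g + cCoeff r s m • e := by
  intro m hm
  induction m, hm using Nat.le_induction with
  | base =>
    rw [hquad, aCoeff_two, bCoeff_two, cCoeff_two]
    module
  | succ m hm ih =>
    rw [pow_succ, ih, smul_add_smul_add_smul_mul_of_sq_eq _ _ _ _ _ hquad heg, aCoeff_succ r s hm,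
      bCoeff_succ r s hm, cCoeff_succ r s hm]

/-- Powers of a BWM generator lie in the span of `{1, g, e}`:
`g^m = a_m + b_m·g + c_m·e` for all `m ≥ 2`. -/
theorem bwm_powers {A : Type*} [Ring A] [Algebra K A]
    (r s : K) (hr : r ≠ 0) (hs : s ≠ 0)
    (g e : A)
    (hquad : g ^ 2 = 1 + (s - s⁻¹) • (g - r⁻¹ • e))
    (heg : e * g = r⁻¹ • e) :
    ∀ m : ℕ, 2 ≤ m →
      g ^ m = aCoeff r s m • (1 : A) + bCoeff r s m • g + cCoeff r s m • e :=
  bwm_powers_general r s g e hquad heg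
end

section
/- With a_m, b_m, c_m defined by a_2 = 1, b_2 = s − s^{−1}, c_2 = −r^{−1}(s − s^{−1}), and a_{m+1} = b_m, b_{m+1} = a_m + (s−s^{−1})b_m, c_{m+1} = r^{−1}(c_m − (s−s^{−1})b_m), the following parity identities of Laurent polynomials hold for all m ≥ 2: a_m(−r,−s) = (−1)^m a_m(r,s), b_m(−r,−s) = (−1)^{m+1} b_m(r,s), and c_m(−r,−s) = (−1)^m c_m(r,s). -/
variable {K : Type*} [Field K]

/-- The sign pattern is preserved because both `s - s⁻¹` and `r⁻¹` are odd under negation. -/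
lemma abcAux_neg_neg (r s : K) (n : ℕ) :
    abcAux (-r) (-s) n =
      ((-1) ^ n * (abcAux r s n).1, (-1) ^ (n + 1) * (abcAux r s n).2.1,
        (-1) ^ n * (abcAux r s n).2.2) := by
  induction n with
  | zero => refine Prod.ext ?_ (Prod.ext ?_ ?_) <;> simp only [abcAux, inv_neg] <;> ring
  | succ n ih =>
    refine Prod.ext ?_ (Prod.ext ?_ ?_) <;> simp only [abcAux, ih, inv_neg] <;> ring

theorem abc_parity_general (r s : K) (m : ℕ) (hm : 2 ≤ m) :
    aCoeff (-r) (-s) m = (-1 : K) ^ m * aCoeff r s m ∧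
    bCoeff (-r) (-s) m = (-1 : K) ^ (m + 1) * bCoeff r s m ∧
    cCoeff (-r) (-s) m = (-1 : K) ^ m * cCoeff r s m := by
  obtain ⟨n, rfl⟩ := Nat.exists_eq_add_of_le' hm
  have hsign (k : ℕ) : (-1 : K) ^ (k + 2) = (-1) ^ k := by ring
  simp only [aCoeff, bCoeff, cCoeff, Nat.add_sub_cancel, abcAux_neg_neg, hsign,
    add_right_comm n 2 1, and_self]

/-- Parity identities: `a_m(−r,−s) = (−1)^m a_m(r,s)`, `b_m(−r,−s) = (−1)^{m+1} b_m(r,s)`,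
`c_m(−r,−s) = (−1)^m c_m(r,s)` for all `m ≥ 2`. -/
theorem abc_parity (r s : K) (hr : r ≠ 0) (hs : s ≠ 0) (m : ℕ) (hm : 2 ≤ m) :
    aCoeff (-r) (-s) m = (-1 : K) ^ m * aCoeff r s m ∧
    bCoeff (-r) (-s) m = (-1 : K) ^ (m + 1) * bCoeff r s m ∧
    cCoeff (-r) (-s) m = (-1 : K) ^ m * cCoeff r s m :=
  abc_parity_general r s m hm
end
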